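/- arXiv:1504.04616 — 2 statements merged into one kernel-verified Lean document; each statement's English description precedes it below -/
import Mathlib

section
/- For all sufficiently large n, the number of balanced bipartite graphs G = (V_s, V_p, E) with V_s = V_p = Fin n whose readability satisfies r(G) ≤ n/(15·log₂ n) is at most 2^{2n²/3}. Consequently, since there are 2^{n²} such graphs in total, the fraction of balanced bipartite graphs on parts of size n with readability at least n/(15·log₂ n) tends to 1 as n → ∞ (almost all such graphs have readability Ω(n/log n)). -/
namespace Readability

/-- `x` overlaps `y` by `i`: `1 ≤ i ≤ min |x| |y|` and the length-`i` suffix of `x`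
equals the length-`i` prefix of `y`. -/
def OverlapsBy {α : Type*} (x y : List α) (i : ℕ) : Prop :=
  1 ≤ i ∧ i ≤ min x.length y.length ∧ x.drop (x.length - i) = y.take i

/-- `ov x y`: the minimum `i` such that `x` overlaps `y` by `i`, or `0` if none exists. -/
noncomputable def ov {α : Type*} (x y : List α) : ℕ := sInf {i | OverlapsBy x y i}

/-- An overlap labeling of length `r` of the bipartite graph with parts `Vs`, `Vp` and
edge relation `E ⊆ Vs × Vp`. -/
def IsOverlapLabeling {α Vs Vp : Type*} (E : Vs → Vp → Prop) (r : ℕ)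
    (ls : Vs → List α) (lp : Vp → List α) : Prop :=
  (∀ u, (ls u).length = r) ∧ (∀ v, (lp v).length = r) ∧
    ∀ u v, E u v ↔ ∃ i, OverlapsBy (ls u) (lp v) i

/-- Bipartite readability: the least `r` admitting an overlap labeling of length `r`
(over the alphabet `ℕ`). -/
noncomputable def bReadability {Vs Vp : Type*} (E : Vs → Vp → Prop) : ℕ :=
  sInf {r | ∃ (ls : Vs → List ℕ) (lp : Vp → List ℕ), IsOverlapLabeling E r ls lp}

/-- An injective overlap labeling of length `r` of the digraph with arc relation `A`. -/
def IsInjOverlapLabeling {V : Type*} (A : V → V → Prop) (r : ℕ) (ℓ : V → List ℕ) : Prop :=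
  (∀ v, (ℓ v).length = r) ∧ Function.Injective ℓ ∧
    ∀ u v, A u v ↔ 0 < ov (ℓ u) (ℓ v) ∧ ov (ℓ u) (ℓ v) < r

/-- Digraph readability: the least `r` admitting an injective overlap labeling of length `r`. -/
noncomputable def dReadability {V : Type*} (A : V → V → Prop) : ℕ :=
  sInf {r | ∃ ℓ : V → List ℕ, IsInjOverlapLabeling A r ℓ}

/-- A decomposition of size `k`: a weight function on edges with values in `{1,…,k}`. -/
def IsDecomposition {Vs Vp : Type*} (E : Vs → Vp → Prop) (k : ℕ) (w : Vs → Vp → ℕ) : Prop :=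
  ∀ u v, E u v → 1 ≤ w u v ∧ w u v ≤ k

/-- An induced `P₄` with consecutive edges `(s1,p1), (s2,p1), (s2,p2)`. -/
def InducedP4 {Vs Vp : Type*} (E : Vs → Vp → Prop) (s1 s2 : Vs) (p1 p2 : Vp) : Prop :=
  s1 ≠ s2 ∧ p1 ≠ p2 ∧ E s1 p1 ∧ E s2 p1 ∧ E s2 p2 ∧ ¬ E s1 p2

/-- The `P₄`-rule: on each induced `P₄`, if the middle edge has maximum weight then its weight
is at least the sum of the weights of the two outer edges. -/
def SatisfiesP4Rule {Vs Vp : Type*} (E : Vs → Vp → Prop) (w : Vs → Vp → ℕ) : Prop :=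
  ∀ s1 s2 p1 p2, InducedP4 E s1 s2 p1 p2 →
    w s2 p1 = max (w s1 p1) (max (w s2 p1) (w s2 p2)) →
    w s1 p1 + w s2 p2 ≤ w s2 p1

/-- The strict `P₄`-rule: as the `P₄`-rule, with strict inequality. -/
def SatisfiesStrictP4Rule {Vs Vp : Type*} (E : Vs → Vp → Prop) (w : Vs → Vp → ℕ) : Prop :=
  ∀ s1 s2 p1 p2, InducedP4 E s1 s2 p1 p2 →
    w s2 p1 = max (w s1 p1) (max (w s2 p1) (w s2 p2)) →
    w s1 p1 + w s2 p2 < w s2 p1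

/-- `C₄`-freeness of a bipartite graph. -/
def C4Free {Vs Vp : Type*} (E : Vs → Vp → Prop) : Prop :=
  ∀ (s1 s2 : Vs) (p1 p2 : Vp), s1 ≠ s2 → p1 ≠ p2 →
    ¬ (E s1 p1 ∧ E s1 p2 ∧ E s2 p1 ∧ E s2 p2)

/-- The subgraph `G_i` of a decomposition: edges of weight exactly `i`. -/
def SubAt {Vs Vp : Type*} (E : Vs → Vp → Prop) (w : Vs → Vp → ℕ) (i : ℕ) :
    Vs → Vp → Prop :=
  fun u v => E u v ∧ w u v = i

/-- A bipartite edge relation is a disjoint union of bicliques iff it has no induced `P₄`,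
i.e. whenever `(s1,p1), (s2,p1), (s2,p2)` are edges, so is `(s1,p2)`. -/
def BicliqueUnion {Vs Vp : Type*} (H : Vs → Vp → Prop) : Prop :=
  ∀ s1 s2 p1 p2, H s1 p1 → H s2 p1 → H s2 p2 → H s1 p2

/-- The HUB-rule for a decomposition `w`:
(i) every level graph `G_i` is a disjoint union of bicliques, and
(ii) non-isolated twins in `G_i` (for `i ≥ 2`) are twins in every `G_j` with `1 ≤ j ≤ i-1`
(stated for both parts of the bipartition). -/
def SatisfiesHUBRule {Vs Vp : Type*} (E : Vs → Vp → Prop) (w : Vs → Vp → ℕ) : Prop :=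
  (∀ i, 1 ≤ i → BicliqueUnion (SubAt E w i)) ∧
  (∀ i, 2 ≤ i → ∀ u v : Vs, u ≠ v → (∃ p, SubAt E w i u p) →
      (∀ p, SubAt E w i u p ↔ SubAt E w i v p) →
      ∀ j, 1 ≤ j → j ≤ i - 1 → ∀ p, SubAt E w j u p ↔ SubAt E w j v p) ∧
  (∀ i, 2 ≤ i → ∀ u v : Vp, u ≠ v → (∃ s, SubAt E w i s u) →
      (∀ s, SubAt E w i s u ↔ SubAt E w i s v) →
      ∀ j, 1 ≤ j → j ≤ i - 1 → ∀ s, SubAt E w j s u ↔ SubAt E w j s v)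

/-- The HUB number: minimum size of a decomposition satisfying the HUB-rule. -/
noncomputable def hubNumber {Vs Vp : Type*} (E : Vs → Vp → Prop) : ℕ :=
  sInf {k | ∃ w, IsDecomposition E k w ∧ SatisfiesHUBRule E w}

/-- The underlying undirected simple graph on `Vs ⊕ Vp` of a bipartite graph. -/
def underlyingGraph {Vs Vp : Type*} (E : Vs → Vp → Prop) : SimpleGraph (Vs ⊕ Vp) where
  Adj x y := (∃ u v, x = Sum.inl u ∧ y = Sum.inr v ∧ E u v) ∨
    (∃ u v, x = Sum.inr v ∧ y = Sum.inl u ∧ E u v)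
  symm := by
    constructor
    rintro x y (⟨u, v, rfl, rfl, h⟩ | ⟨u, v, rfl, rfl, h⟩)
    · exact Or.inr ⟨u, v, rfl, rfl, h⟩
    · exact Or.inl ⟨u, v, rfl, rfl, h⟩
  loopless := by
    constructor
    rintro x (⟨u, v, h1, h2, -⟩ | ⟨u, v, h1, h2, -⟩) <;> subst h1 <;> simp_all

/-- The radius of a graph: the least `r` such that some vertex has eccentricity at most `r`
(for a finite connected graph this is `min_u max_v dist(u,v)`). -/
noncomputable def graphRadius {V : Type*} (G : SimpleGraph V) : ℕ :=
  sInf {r | ∃ u, ∀ v, G.dist u v ≤ r}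

/-- Distinctness of two vertices `u, v` of the same part (here the `Vs`-part, with
neighborhoods taken in `Vp`): `max(|N(u)∖N(v)|, |N(v)∖N(u)|)`. -/
noncomputable def DTpair {Vs Vp : Type*} (E : Vs → Vp → Prop) (u v : Vs) : ℕ :=
  max {p : Vp | E u p ∧ ¬ E v p}.ncard {p : Vp | E v p ∧ ¬ E u p}.ncard

/-- Distinctness of a bipartite graph: the minimum of `DT(u,v)` over pairs of distinct
vertices in the same part. -/
noncomputable def distinctness {Vs Vp : Type*} (E : Vs → Vp → Prop) : ℕ :=
  sInf ({d | ∃ u v : Vs, u ≠ v ∧ d = DTpair E u v} ∪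
        {d | ∃ u v : Vp, u ≠ v ∧ d = DTpair (fun p s => E s p) u v})

/-- A bipartite graph fails to be a matching iff some vertex has degree at least 2. -/
def NotMatching {Vs Vp : Type*} (E : Vs → Vp → Prop) : Prop :=
  (∃ u : Vs, ∃ p1 p2 : Vp, p1 ≠ p2 ∧ E u p1 ∧ E u p2) ∨
  (∃ p : Vp, ∃ u1 u2 : Vs, u1 ≠ u2 ∧ E u1 p ∧ E u2 p)

/-!
Every finite bipartite graph has an overlap labeling, so its readability is attained. The label
of `v ∈ V_p` begins with a string `chain u v` for each neighbour `u` of `v`, these strings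
extending one another as `u` grows; the label of `u ∈ V_s` ends with `chain u v` for the last
neighbour `v` of `u`, which in turn ends with `chain u v'` for every earlier neighbour `v'`.
Markers from distinct residue classes mod 4 make every common suffix/prefix parse as such a
`chain`.

A graph is determined by any of its overlap labelings, and a labeling of length `r` of a graph on
`n + n` vertices can be rewritten over `2nr + 1` letters. Hence at most `(r + 1)(2nr + 1)^{2nr}`,
that is `2^{O(n r log n)}`, graphs have readability at most `r`, which is below `2^{2n²/3}` for
`r ≤ n / (15 log₂ n)`.
-/

theorem _root_.List.exists_eq_append_of_suffix_flatMap {α β : Type*} (g : α → List β) :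
    ∀ (L : List α) {s : List β}, s <:+ L.flatMap g → s ≠ [] →
      ∃ L₁ a L₂ s', L = L₁ ++ a :: L₂ ∧ s = s' ++ L₂.flatMap g ∧ s' <:+ g a ∧ s' ≠ []
  | [], s, h, hs => absurd (List.suffix_nil.1 h) hs
  | a :: L, s, h, hs => by
    have split : s <:+ L.flatMap g ∨ ∃ s', s = s' ++ L.flatMap g ∧ s' <:+ g a ∧ s' ≠ [] := by
      obtain ⟨p, hp⟩ := h
      rw [List.flatMap_cons] at hp
      rcases List.append_eq_append_iff.1 hp with ⟨s', hga, rfl⟩ | ⟨c, -, hc⟩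
      · rcases eq_or_ne s' [] with rfl | hs'
        · exact Or.inl (by simp)
        · exact Or.inr ⟨s', rfl, ⟨p, hga.symm⟩, hs'⟩
      · exact Or.inl ⟨c, hc.symm⟩
    rcases split with hL | ⟨s', rfl, h', hs'⟩
    · obtain ⟨L₁, b, L₂, s', rfl, rfl, h', hs'⟩ :=
        List.exists_eq_append_of_suffix_flatMap g L hL hs
      exact ⟨a :: L₁, b, L₂, s', rfl, rfl, h', hs'⟩
    · exact ⟨[], a, L, s', rfl, rfl, h', hs'⟩

theorem _root_.List.mem_of_suffix_replicate_append {α : Type*} {s y : List α} {k : ℕ} {c : α}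
    (h : s <:+ List.replicate k c ++ y) (hlen : y.length < s.length) : c ∈ s := by
  obtain ⟨z, rfl⟩ := List.suffix_of_suffix_length_le (List.suffix_append _ y) h hlen.le
  obtain ⟨a, ha⟩ := List.exists_mem_of_ne_nil z (by rintro rfl; simp at hlen)
  have hac : a = c := List.eq_of_mem_replicate ((List.suffix_append_self_iff.1 h).subset ha)
  exact List.mem_append_left y (hac ▸ ha)

theorem _root_.List.mem_of_prefix_append_replicate {α : Type*} {s y : List α} {k : ℕ} {c : α}
    (h : s <+: y ++ List.replicate k c) (hlen : y.length < s.length) : c ∈ s := by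
  have h' : s.reverse <:+ List.replicate k c ++ y.reverse := by
    simpa using h.reverse
  simpa using List.mem_of_suffix_replicate_append h' (by simpa using hlen)

theorem exists_overlapsBy_iff {α : Type*} {x y : List α} :
    (∃ i, OverlapsBy x y i) ↔ ∃ s, s ≠ [] ∧ s <:+ x ∧ s <+: y := by
  constructor
  · rintro ⟨i, hi, hix, heq⟩
    refine ⟨x.drop (x.length - i), ?_, List.drop_suffix _ _, heq ▸ List.take_prefix _ _⟩
    rw [← List.length_pos_iff, List.length_drop]
    omega
  · rintro ⟨s, hs, hx, hy⟩
    refine ⟨s.length, List.length_pos_iff.2 hs, le_min hx.length_le hy.length_le, ?_⟩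
    rw [← List.suffix_iff_eq_drop.1 hx, ← List.prefix_iff_eq_take.1 hy]

section Construction

variable (f : ℕ → ℕ → Bool)

def startSym (v : ℕ) : ℕ := 4 * v

def edgeSym (u v : ℕ) : ℕ := 4 * Nat.pair u v + 1

def padS (u : ℕ) : ℕ := 4 * u + 2

def padP (v : ℕ) : ℕ := 4 * v + 3

def nbrsUpTo (u v : ℕ) : List ℕ := (List.range (u + 1)).filter (fun u' => f u' v)

def lastNbrBelow (u v : ℕ) : ℕ := Nat.findGreatest (fun w => f u w = true) (v - 1)

theorem lastNbrBelow_lt {u v : ℕ} (h : ∃ w, w < v ∧ f u w = true) : lastNbrBelow f u v < v := by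
  obtain ⟨w, hw, -⟩ := h
  exact lt_of_le_of_lt (Nat.findGreatest_le _) (by omega)

-- The prefix of the label of `v` that the label of `u` overlaps when `f u v`.
def chain (u v : ℕ) : List ℕ :=
  startSym v :: (nbrsUpTo f u v).flatMap
    (fun u' => edgeSym u' v ::
      if _ : ∃ w, w < v ∧ f u' w = true then chain u' (lastNbrBelow f u' v) else [])
termination_by v
decreasing_by exact lastNbrBelow_lt f ‹_›

def prevChain (u v : ℕ) : List ℕ :=
  if ∃ w, w < v ∧ f u w = true then chain f u (lastNbrBelow f u v) else []

def block (v u : ℕ) : List ℕ := edgeSym u v :: prevChain f u v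

variable {f}

theorem chain_eq (u v : ℕ) : chain f u v = startSym v :: (nbrsUpTo f u v).flatMap (block f v) := by
  rw [chain]
  rfl

theorem lastNbrBelow_spec {u v w : ℕ} (hw : w < v) (h : f u w = true) :
    f u (lastNbrBelow f u v) = true ∧ w ≤ lastNbrBelow f u v ∧ lastNbrBelow f u v < v :=
  ⟨Nat.findGreatest_spec (P := fun w => f u w = true) (by omega) h,
    Nat.le_findGreatest (by omega) h, lastNbrBelow_lt f ⟨w, hw, h⟩⟩

theorem prevChain_eq_chain {u v w : ℕ} (hw : w < v) (h : f u w = true) :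
    prevChain f u v = chain f u (lastNbrBelow f u v) :=
  if_pos ⟨w, hw, h⟩

theorem prevChain_eq_nil_or {u v : ℕ} : prevChain f u v = [] ∨
    ∃ w < v, f u w = true ∧ prevChain f u v = chain f u w := by
  by_cases hex : ∃ w, w < v ∧ f u w = true
  · obtain ⟨w, hw, h⟩ := hex
    obtain ⟨hf, -, hlt⟩ := lastNbrBelow_spec hw h
    exact Or.inr ⟨_, hlt, hf, prevChain_eq_chain hw h⟩
  · exact Or.inl (if_neg hex)

theorem mem_nbrsUpTo {u u' v : ℕ} : u' ∈ nbrsUpTo f u v ↔ u' ≤ u ∧ f u' v = true := by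
  simp [nbrsUpTo]

theorem nbrsUpTo_of_true {u v : ℕ} (h : f u v = true) :
    nbrsUpTo f u v = (List.range u).filter (fun u' => f u' v) ++ [u] := by
  simp [nbrsUpTo, List.range_succ, h]

theorem nbrsUpTo_prefix {u u₂ : ℕ} (v : ℕ) (h : u ≤ u₂) : nbrsUpTo f u v <+: nbrsUpTo f u₂ v := by
  refine List.IsPrefix.filter _ ?_
  obtain ⟨k, rfl⟩ := Nat.exists_eq_add_of_le h
  rw [show u + k + 1 = u + 1 + k by omega, List.range_add (n := u + 1)]
  exact List.prefix_append _ _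

theorem chain_eq_append_of_le {u u₂ : ℕ} (v : ℕ) (h : u ≤ u₂) :
    ∃ L : List ℕ, chain f u₂ v = chain f u v ++ L.flatMap (block f v) := by
  obtain ⟨L, hL⟩ := nbrsUpTo_prefix (f := f) v h
  exact ⟨L, by rw [chain_eq, chain_eq, ← hL, List.flatMap_append, List.cons_append]⟩

theorem block_suffix_chain {u v : ℕ} (h : f u v = true) : block f v u <:+ chain f u v := by
  rw [chain_eq, nbrsUpTo_of_true h, List.flatMap_append]
  simp

theorem chain_suffix_chain {u : ℕ} : ∀ {v' v : ℕ}, f u v' = true → f u v = true → v' ≤ v →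
    chain f u v' <:+ chain f u v := by
  intro v' v
  induction v using Nat.strong_induction_on generalizing v' with
  | _ v IH =>
    intro h' h hle
    rcases hle.eq_or_lt with rfl | hlt
    · exact List.suffix_rfl
    · obtain ⟨hfw, hle', hlt'⟩ := lastNbrBelow_spec hlt h'
      have hprev : prevChain f u v <:+ chain f u v :=
        (List.suffix_cons _ _).trans (block_suffix_chain h)
      rw [prevChain_eq_chain hlt h'] at hprev
      exact (IH _ hlt' h' hfw hle').trans hprev

theorem chain_suffix_prevChain {u v k : ℕ} (h : f u v = true) (hv : v < k) :
    chain f u v <:+ prevChain f u k := by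
  obtain ⟨hf, hle, -⟩ := lastNbrBelow_spec hv h
  rw [prevChain_eq_chain hv h]
  exact chain_suffix_chain h hf hle

end Construction

section Parsing

variable {f : ℕ → ℕ → Bool}

theorem mod_four_le_one_of_mem_chain {x : ℕ} : ∀ {v u : ℕ}, x ∈ chain f u v → x % 4 ≤ 1 := by
  intro v
  induction v using Nat.strong_induction_on with
  | _ v IH =>
    intro u hx
    rw [chain_eq] at hx
    simp only [List.mem_cons, List.mem_flatMap, block] at hx
    rcases hx with rfl | ⟨a, -, rfl | hx⟩
    · simp [startSym]
    · simp [edgeSym, Nat.add_mod]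
    · rcases prevChain_eq_nil_or (f := f) (u := a) (v := v) with h | ⟨w, hw, -, h⟩
      · simp [h] at hx
      · exact IH w hw (h ▸ hx)

theorem mod_four_le_one_of_mem_prevChain {x u v : ℕ} (hx : x ∈ prevChain f u v) : x % 4 ≤ 1 := by
  rcases prevChain_eq_nil_or (f := f) (u := u) (v := v) with h | ⟨w, -, -, h⟩
  · simp [h] at hx
  · exact mod_four_le_one_of_mem_chain (h ▸ hx)

theorem head?_eq_of_prefix_chain {s : List ℕ} {m v : ℕ} (hs : s ≠ []) (h : s <+: chain f m v) :
    s.head? = some (startSym v) := by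
  obtain ⟨t, ht⟩ := h
  cases s with
  | nil => exact absurd rfl hs
  | cons a s => rw [chain_eq] at ht; simp_all

theorem head?_flatMap_block (v : ℕ) (L : List ℕ) :
    (L.flatMap (block f v)).head? = L.head?.map (edgeSym · v) := by
  cases L <;> simp [block]

theorem not_flatMap_block_prefix {v v₀ b : ℕ} {L L' : List ℕ} (hv : v ≠ v₀) :
    ¬ (b :: L).flatMap (block f v₀) <+: L'.flatMap (block f v) := by
  rintro ⟨t, ht⟩
  have hhead := congrArg List.head? ht
  rw [List.head?_append, head?_flatMap_block, head?_flatMap_block] at hhead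
  cases L' with
  | nil => simp at hhead
  | cons c L' =>
    simp only [List.head?_cons, Option.map_some, Option.some_or, Option.some.injEq,
      edgeSym] at hhead
    exact hv (Nat.pair_eq_pair.1 (show Nat.pair b v₀ = Nat.pair c v by omega)).2.symm

theorem eq_of_nbrsUpTo_eq_append {u v a : ℕ} {L : List ℕ} (h : f u v = true)
    (he : nbrsUpTo f u v = L ++ [a]) : a = u := by
  rw [nbrsUpTo_of_true h] at he
  simpa using (List.append_inj' he rfl).2.symm

theorem eq_chain_of_suffix_of_prefix {m : ℕ} :
    ∀ {v₀ u v : ℕ} {s : List ℕ}, u ≤ m → f u v₀ = true → s ≠ [] →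
      s <:+ chain f u v₀ → s <+: chain f m v → f u v = true ∧ s = chain f u v ∧ v ≤ v₀ := by
  intro v₀
  induction v₀ using Nat.strong_induction_on with
  | _ v₀ IH =>
    intro u v s hum hf hs hsuf hpre
    have hhead := head?_eq_of_prefix_chain hs hpre
    rw [chain_eq] at hsuf
    rcases List.suffix_cons_iff.1 hsuf with rfl | hsuf
    · have hv : v = v₀ := by simpa [startSym, eq_comm] using hhead
      subst hv
      exact ⟨hf, (chain_eq u v).symm, le_rfl⟩
    obtain ⟨L₁, a, L₂, s', hL, rfl, hs'suf, hs'⟩ :=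
      List.exists_eq_append_of_suffix_flatMap _ _ hsuf hs
    have hau : a ≤ u := (mem_nbrsUpTo.1 (hL ▸ List.mem_append_right _ List.mem_cons_self)).1
    rcases List.suffix_cons_iff.1 hs'suf with rfl | hs'suf
    · simp [startSym, edgeSym] at hhead
      omega
    rcases prevChain_eq_nil_or (f := f) (u := a) (v := v₀) with hnil | ⟨w, hw, hfw, hprev⟩
    · exact absurd (List.suffix_nil.1 (hnil ▸ hs'suf)) hs'
    rw [hprev] at hs'suf
    obtain ⟨hfv, rfl, hvw⟩ :=
      IH w hw (hau.trans hum) hfw hs' hs'suf ((List.prefix_append _ _).trans hpre)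
    cases L₂ with
    | nil =>
      obtain rfl := eq_of_nbrsUpTo_eq_append hf hL
      simpa using ⟨hfv, by omega⟩
    | cons b L₂ =>
      -- after `chain a v`, `s` continues with an edge marker of `v₀`, `chain f m v` with one of `v`
      obtain ⟨L₃, hL₃⟩ := chain_eq_append_of_le (f := f) v (hau.trans hum)
      rw [hL₃, List.prefix_append_right_inj] at hpre
      exact absurd hpre (not_flatMap_block_prefix (by omega))

end Parsing

section Labels

variable (f : ℕ → ℕ → Bool) (m k r : ℕ)

def labelS (u : ℕ) : List ℕ :=
  List.replicate (r - (prevChain f u k).length) (padS u) ++ prevChain f u k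

def labelP (v : ℕ) : List ℕ :=
  chain f m v ++ List.replicate (r - (chain f m v).length) (padP v)

variable {f m k r}

theorem length_labelS {u : ℕ} (h : (prevChain f u k).length ≤ r) : (labelS f k r u).length = r := by
  simp only [labelS, List.length_append, List.length_replicate]
  omega

theorem length_labelP {v : ℕ} (h : (chain f m v).length ≤ r) : (labelP f m r v).length = r := by
  simp only [labelP, List.length_append, List.length_replicate]
  omega

theorem padS_not_mem_labelP (u v : ℕ) : padS u ∉ labelP f m r v := by
  intro h
  rcases List.mem_append.1 h with h | h
  · have := mod_four_le_one_of_mem_chain h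
    simp [padS, Nat.add_mod] at this
  · have := List.eq_of_mem_replicate h
    simp only [padS, padP] at this
    omega

theorem padP_not_mem_labelS (u v : ℕ) : padP v ∉ labelS f k r u := by
  intro h
  rcases List.mem_append.1 h with h | h
  · have := List.eq_of_mem_replicate h
    simp only [padS, padP] at this
    omega
  · have := mod_four_le_one_of_mem_prevChain h
    simp [padP, Nat.add_mod] at this

theorem exists_overlapsBy_labelS_labelP_iff {u v : ℕ} (hu : u ≤ m) (hv : v < k) :
    (∃ i, OverlapsBy (labelS f k r u) (labelP f m r v) i) ↔ f u v = true := by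
  rw [exists_overlapsBy_iff]
  constructor
  · rintro ⟨s, hs, hsuf, hpre⟩
    have hsuf' : s <:+ prevChain f u k := by
      refine List.suffix_of_suffix_length_le hsuf (List.suffix_append _ _) (not_lt.1 fun hlt => ?_)
      exact padS_not_mem_labelP u v (hpre.subset (List.mem_of_suffix_replicate_append hsuf hlt))
    have hpre' : s <+: chain f m v := by
      refine List.prefix_of_prefix_length_le hpre (List.prefix_append _ _) (not_lt.1 fun hlt => ?_)
      exact padP_not_mem_labelS u v (hsuf.subset (List.mem_of_prefix_append_replicate hpre hlt))
    rcases prevChain_eq_nil_or (f := f) (u := u) (v := k) with hnil | ⟨w, -, hfw, hprev⟩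
    · exact absurd (List.suffix_nil.1 (hnil ▸ hsuf')) hs
    · exact (eq_chain_of_suffix_of_prefix hu hfw hs (hprev ▸ hsuf') hpre').1
  · intro h
    refine ⟨chain f u v, by simp [chain_eq], ?_, ?_⟩
    · exact (chain_suffix_prevChain h hv).trans (List.suffix_append _ _)
    · obtain ⟨L, hL⟩ := chain_eq_append_of_le (f := f) v hu
      rw [labelP, hL, List.append_assoc]
      exact List.prefix_append _ _

end Labels

theorem exists_isOverlapLabeling {Vs Vp : Type*} [Fintype Vs] [Fintype Vp] (E : Vs → Vp → Prop) :
    ∃ (r : ℕ) (ls : Vs → List ℕ) (lp : Vp → List ℕ), IsOverlapLabeling E r ls lp := by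
  classical
  let m := Fintype.card Vs
  let k := Fintype.card Vp
  let iS : Vs → ℕ := fun x => Fintype.equivFin Vs x
  let iP : Vp → ℕ := fun y => Fintype.equivFin Vp y
  have hiS : iS.Injective := Fin.val_injective.comp (Fintype.equivFin Vs).injective
  have hiP : iP.Injective := Fin.val_injective.comp (Fintype.equivFin Vp).injective
  let f : ℕ → ℕ → Bool := fun a b => decide (∃ x y, iS x = a ∧ iP y = b ∧ E x y)
  have hf : ∀ x y, f (iS x) (iP y) = true ↔ E x y := by
    intro x y
    simp only [f, decide_eq_true_iff]
    exact ⟨fun ⟨x', y', hx, hy, h⟩ => hiS hx ▸ hiP hy ▸ h, fun h => ⟨x, y, rfl, rfl, h⟩⟩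
  let r := ∑ x, (prevChain f (iS x) k).length + ∑ y, (chain f m (iP y)).length
  refine ⟨r, fun x => labelS f k r (iS x), fun y => labelP f m r (iP y), ?_, ?_, ?_⟩
  · exact fun x => length_labelS (le_add_right (Finset.single_le_sum
      (f := fun x => (prevChain f (iS x) k).length) (by simp) (Finset.mem_univ x)))
  · exact fun y => length_labelP (le_add_left (Finset.single_le_sum
      (f := fun y => (chain f m (iP y)).length) (by simp) (Finset.mem_univ y)))
  · intro x y
    rw [exists_overlapsBy_labelS_labelP_iff (Fintype.equivFin Vs x).isLt.le
      (Fintype.equivFin Vp y).isLt, hf]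

theorem exists_isOverlapLabeling_bReadability {Vs Vp : Type*} [Fintype Vs] [Fintype Vp]
    (E : Vs → Vp → Prop) :
    ∃ (ls : Vs → List ℕ) (lp : Vp → List ℕ), IsOverlapLabeling E (bReadability E) ls lp :=
  Nat.sInf_mem (exists_isOverlapLabeling E)

theorem _root_.List.map_eq_map_iff_of_injOn {α β : Type*} {g : α → β} {s : Set α} (hg : s.InjOn g) :
    ∀ {x y : List α}, (∀ a ∈ x, a ∈ s) → (∀ a ∈ y, a ∈ s) → (x.map g = y.map g ↔ x = y)
  | [], [], _, _ => by simp
  | [], _ :: _, _, _ => by simp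
  | _ :: _, [], _, _ => by simp
  | a :: x, b :: y, hx, hy => by
    simp only [List.map_cons, List.cons.injEq]
    rw [hg.eq_iff (hx a List.mem_cons_self) (hy b List.mem_cons_self),
      List.map_eq_map_iff_of_injOn hg (fun c hc => hx c (List.mem_cons_of_mem a hc))
        (fun c hc => hy c (List.mem_cons_of_mem b hc))]

theorem overlapsBy_map_iff {α β : Type*} {g : α → β} {s : Set α} (hg : s.InjOn g)
    {x y : List α} (hx : ∀ a ∈ x, a ∈ s) (hy : ∀ a ∈ y, a ∈ s) (i : ℕ) :
    OverlapsBy (x.map g) (y.map g) i ↔ OverlapsBy x y i := by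
  simp only [OverlapsBy, List.length_map, ← List.map_drop, ← List.map_take]
  rw [List.map_eq_map_iff_of_injOn hg (fun a ha => hx a ((List.drop_suffix _ _).subset ha))
    (fun a ha => hy a ((List.take_prefix _ _).subset ha))]

theorem IsOverlapLabeling.map {α β Vs Vp : Type*} {E : Vs → Vp → Prop} {r : ℕ}
    {ls : Vs → List α} {lp : Vp → List α} (h : IsOverlapLabeling E r ls lp)
    {g : α → β} {s : Set α} (hg : s.InjOn g)
    (hs : ∀ u, ∀ a ∈ ls u, a ∈ s) (hp : ∀ v, ∀ a ∈ lp v, a ∈ s) :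
    IsOverlapLabeling E r (fun u => (ls u).map g) (fun v => (lp v).map g) := by
  refine ⟨fun u => by simp [h.1 u], fun v => by simp [h.2.1 v], fun u v => ?_⟩
  simp only [overlapsBy_map_iff hg (hs u) (hp v), h.2.2 u v]

theorem IsOverlapLabeling.exists_fin {α Vs Vp : Type*} [DecidableEq α] [Fintype Vs] [Fintype Vp]
    {E : Vs → Vp → Prop} {r : ℕ} {ls : Vs → List α} {lp : Vp → List α}
    (h : IsOverlapLabeling E r ls lp) {B : ℕ}
    (hB : (Fintype.card Vs + Fintype.card Vp) * r < B) :
    ∃ (ls' : Vs → List (Fin B)) (lp' : Vp → List (Fin B)), IsOverlapLabeling E r ls' lp' := by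
  set all := Finset.univ.toList.flatMap ls ++ Finset.univ.toList.flatMap lp
  have hlen : all.length < B := by
    simp only [all, List.length_append, List.length_flatMap, h.1, h.2.1, List.map_const',
      List.sum_replicate, Finset.length_toList, Finset.card_univ, smul_eq_mul]
    linarith
  let g : α → Fin B := fun a => ⟨all.idxOf a, List.idxOf_le_length.trans_lt hlen⟩
  have hg : {a | a ∈ all}.InjOn g := fun a ha b _ hab =>
    (List.idxOf_inj ha).1 (Fin.mk.inj_iff.1 hab)
  exact ⟨_, _, h.map hg
    (fun u a ha => List.mem_append_left _ (List.mem_flatMap.2 ⟨u, by simp, ha⟩))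
    (fun v a ha => List.mem_append_right _ (List.mem_flatMap.2 ⟨v, by simp, ha⟩))⟩

theorem card_bReadability_le {Vs Vp : Type*} [Fintype Vs] [Fintype Vp] (r₀ : ℕ) :
    Nat.card {E : Vs → Vp → Bool // bReadability (fun u v => E u v = true) ≤ r₀} ≤
      (r₀ + 1) * ((Fintype.card Vs + Fintype.card Vp) * r₀ + 1) ^
        ((Fintype.card Vs + Fintype.card Vp) * r₀) := by
  classical
  set c := Fintype.card Vs + Fintype.card Vp
  set B := c * r₀ + 1
  let Code := Σ r : Fin (r₀ + 1), (Vs → List.Vector (Fin B) r) × (Vp → List.Vector (Fin B) r)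
  let decode : Code → Vs → Vp → Bool := fun ⟨_, a, b⟩ u v =>
    decide (∃ i, OverlapsBy (a u).toList (b v).toList i)
  have hrange : {E : Vs → Vp → Bool | bReadability (fun u v => E u v = true) ≤ r₀} ⊆
      Set.range decode := by
    intro E hE
    obtain ⟨ls, lp, h⟩ := exists_isOverlapLabeling_bReadability (fun u v => E u v = true)
    obtain ⟨ls', lp', h'⟩ := h.exists_fin (B := B) (Nat.lt_succ_of_le (Nat.mul_le_mul_left c hE))
    refine ⟨⟨⟨_, Nat.lt_succ_of_le hE⟩, fun u => ⟨ls' u, h'.1 u⟩, fun v => ⟨lp' v, h'.2.1 v⟩⟩, ?_⟩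
    funext u v
    simp [decode, ← h'.2.2 u v]
  have hcode : Nat.card Code ≤ (r₀ + 1) * B ^ (c * r₀) := by
    rw [Nat.card_eq_fintype_card]
    simp only [Code, Fintype.card_sigma, Fintype.card_prod, Fintype.card_fun, card_vector,
      Fintype.card_fin]
    calc ∑ r : Fin (r₀ + 1), (B ^ (r : ℕ)) ^ Fintype.card Vs * (B ^ (r : ℕ)) ^ Fintype.card Vp
        ≤ ∑ _r : Fin (r₀ + 1), B ^ (c * r₀) := Finset.sum_le_sum fun r _ => by
          rw [← pow_mul, ← pow_mul, ← pow_add, ← mul_add, mul_comm]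
          exact Nat.pow_le_pow_right (by omega) (Nat.mul_le_mul_left c (Nat.lt_succ_iff.1 r.isLt))
      _ = (r₀ + 1) * B ^ (c * r₀) := by simp
  calc Nat.card {E : Vs → Vp → Bool // bReadability (fun u v => E u v = true) ≤ r₀}
      ≤ Nat.card (Set.range decode) := Nat.card_mono (Set.toFinite _) hrange
    _ ≤ Nat.card Code := Finite.card_range_le decode
    _ ≤ (r₀ + 1) * B ^ (c * r₀) := hcode

theorem natCast_pow_eq_two_rpow {n : ℕ} (hn : 0 < n) (k : ℕ) :
    (n : ℝ) ^ k = 2 ^ (Real.logb 2 n * k) := by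
  rw [Real.rpow_mul_natCast zero_le_two, Real.rpow_logb zero_lt_two one_lt_two.ne' (by positivity)]

theorem one_le_logb_two {n : ℕ} (hn : 2 ≤ n) : 1 ≤ Real.logb 2 n := by
  rw [Real.le_logb_iff_rpow_le one_lt_two (by positivity), Real.rpow_one]
  exact_mod_cast hn

theorem logb_two_le_self (n : ℕ) : Real.logb 2 n ≤ n := by
  rcases n.eq_zero_or_pos with rfl | hn
  · simp
  rw [Real.logb_le_iff_le_rpow one_lt_two (by positivity), Real.rpow_natCast]
  exact_mod_cast n.lt_two_pow_self.le

theorem succ_mul_pow_le_two_rpow {n r : ℕ} (hn : 3 ≤ n)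
    (hr : (r : ℝ) * (15 * Real.logb 2 n) ≤ n) :
    (((r + 1) * ((n + n) * r + 1) ^ ((n + n) * r) : ℕ) : ℝ) ≤ 2 ^ ((2 : ℝ) * (n : ℝ) ^ 2 / 3) := by
  set L := Real.logb 2 n
  have hL1 : 1 ≤ L := one_le_logb_two (by omega)
  have hLn : L ≤ n := logb_two_le_self n
  have hn3 : (3 : ℝ) ≤ n := by exact_mod_cast hn
  have hr15 : 15 * (r : ℝ) ≤ n := by nlinarith
  calc (((r + 1) * ((n + n) * r + 1) ^ ((n + n) * r) : ℕ) : ℝ)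
      ≤ (n : ℝ) * ((n : ℝ) ^ 2) ^ ((n + n) * r) := by
        push_cast
        gcongr
        · linarith
        · nlinarith
    _ = 2 ^ (L * (4 * n * r + 1 : ℕ)) := by
        rw [← natCast_pow_eq_two_rpow (by omega), ← pow_mul, ← pow_succ']
        ring_nf
    _ ≤ 2 ^ ((2 : ℝ) * (n : ℝ) ^ 2 / 3) := by
        gcongr
        · norm_num
        · push_cast
          nlinarith

theorem card_bReadability_le_div_logb {n : ℕ} (hn : 3 ≤ n) :
    (Nat.card {E : Fin n → Fin n → Bool //
        (bReadability (fun u v => E u v = true) : ℝ) ≤ (n : ℝ) / (15 * Real.logb 2 n)} : ℝ)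
      ≤ 2 ^ ((2 : ℝ) * (n : ℝ) ^ 2 / 3) := by
  set r₀ := ⌊(n : ℝ) / (15 * Real.logb 2 n)⌋₊
  have hpos : 0 < 15 * Real.logb 2 n := by linarith [one_le_logb_two (n := n) (by omega)]
  have hr₀ : (r₀ : ℝ) * (15 * Real.logb 2 n) ≤ n :=
    (le_div_iff₀ hpos).1 (Nat.floor_le (div_nonneg (Nat.cast_nonneg n) hpos.le))
  have hcard := card_bReadability_le (Vs := Fin n) (Vp := Fin n) r₀
  rw [Fintype.card_fin] at hcard
  calc (Nat.card {E : Fin n → Fin n → Bool //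
        (bReadability (fun u v => E u v = true) : ℝ) ≤ (n : ℝ) / (15 * Real.logb 2 n)} : ℝ)
      ≤ (Nat.card {E : Fin n → Fin n → Bool // bReadability (fun u v => E u v = true) ≤ r₀} : ℝ) :=
        Nat.cast_le.2 (Nat.card_mono (Set.toFinite _) fun _ hE => Nat.le_floor hE)
    _ ≤ _ := Nat.cast_le.2 hcard
    _ ≤ _ := succ_mul_pow_le_two_rpow hn hr₀

theorem _root_.Nat.card_le_card_subtype_add_card_subtype {α : Type*} [Finite α] {p q : α → Prop}
    (h : ∀ x, p x ∨ q x) : Nat.card α ≤ Nat.card {x // p x} + Nat.card {x // q x} := by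
  classical
  have := Fintype.ofFinite α
  simp only [Nat.card_eq_fintype_card]
  calc Fintype.card α = Fintype.card {x // p x ∨ q x} :=
        (Fintype.card_congr (Equiv.subtypeUnivEquiv h)).symm
    _ ≤ _ := Fintype.card_subtype_or p q

theorem card_fin_fin_bool (n : ℕ) : Nat.card (Fin n → Fin n → Bool) = 2 ^ n ^ 2 := by
  simp [Nat.card_eq_fintype_card, ← pow_mul, sq]

theorem one_sub_half_pow_le_card_div {n : ℕ} (hn : 3 ≤ n) :
    1 - (1 / 2 : ℝ) ^ n ≤ (Nat.card {E : Fin n → Fin n → Bool //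
        (n : ℝ) / (15 * Real.logb 2 n) ≤ (bReadability (fun u v => E u v = true) : ℝ)} : ℝ)
      / 2 ^ (n ^ 2) := by
  have hsplit : (2 : ℝ) ^ n ^ 2 ≤ (Nat.card {E : Fin n → Fin n → Bool //
        (bReadability (fun u v => E u v = true) : ℝ) ≤ (n : ℝ) / (15 * Real.logb 2 n)} : ℝ) +
      (Nat.card {E : Fin n → Fin n → Bool //
        (n : ℝ) / (15 * Real.logb 2 n) ≤ (bReadability (fun u v => E u v = true) : ℝ)} : ℝ) := by
    exact_mod_cast card_fin_fin_bool n ▸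
      Nat.card_le_card_subtype_add_card_subtype fun E => le_total _ _
  have hsmall : (2 : ℝ) ^ ((2 : ℝ) * (n : ℝ) ^ 2 / 3) ≤ (1 / 2 : ℝ) ^ n * 2 ^ n ^ 2 := by
    rw [one_div_pow, div_mul_eq_mul_div, one_mul, le_div_iff₀ (by positivity),
      ← Real.rpow_natCast 2 n, ← Real.rpow_add zero_lt_two, ← Real.rpow_natCast 2 (n ^ 2)]
    gcongr
    · norm_num
    · have hn3 : (3 : ℝ) ≤ n := by exact_mod_cast hn
      push_cast
      nlinarith
  rw [le_div_iff₀ (by positivity)]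
  linarith [card_bReadability_le_div_logb hn]

theorem card_subtype_div_le_one {n : ℕ} (p : (Fin n → Fin n → Bool) → Prop) :
    (Nat.card {E : Fin n → Fin n → Bool // p E} : ℝ) / 2 ^ (n ^ 2) ≤ 1 := by
  rw [div_le_one (by positivity)]
  exact_mod_cast card_fin_fin_bool n ▸ Finite.card_subtype_le _

/-- For all sufficiently large `n`, at most `2^{2n²/3}` of the `2^{n²}` balanced
bipartite graphs on parts `Fin n` have readability at most `n/(15·log₂ n)`; consequently the
fraction of such graphs with readability at least `n/(15·log₂ n)` tends to `1`. -/
theorem statement12 :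
    (∃ N : ℕ, ∀ n : ℕ, N ≤ n →
      (Nat.card {E : Fin n → Fin n → Bool //
          (bReadability (fun u v => E u v = true) : ℝ) ≤ (n : ℝ) / (15 * Real.logb 2 n)} : ℝ)
        ≤ 2 ^ ((2 : ℝ) * (n : ℝ) ^ 2 / 3)) ∧
    Filter.Tendsto (fun n : ℕ =>
      (Nat.card {E : Fin n → Fin n → Bool //
          (n : ℝ) / (15 * Real.logb 2 n) ≤ (bReadability (fun u v => E u v = true) : ℝ)} : ℝ)
        / 2 ^ (n ^ 2)) Filter.atTop (nhds 1) := by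
  refine ⟨⟨3, fun n => card_bReadability_le_div_logb⟩, ?_⟩
  have hlower : Filter.Tendsto (fun n : ℕ => 1 - (1 / 2 : ℝ) ^ n) Filter.atTop (nhds 1) := by
    simpa using tendsto_const_nhds.sub
      (tendsto_pow_atTop_nhds_zero_of_lt_one (r := (1 / 2 : ℝ)) (by norm_num) (by norm_num))
  refine tendsto_of_tendsto_of_tendsto_of_le_of_le' hlower tendsto_const_nhds ?_
    (Filter.Eventually.of_forall fun _ => card_subtype_div_le_one _)
  filter_upwards [Filter.eventually_ge_atTop 3] with n hn
  exact one_sub_half_pow_le_card_div hn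

end Readability
end

section
/- Let T = (V_s, V_p, E) be a bipartite graph whose underlying undirected graph on V_s ⊔ V_p is a tree (connected and acyclic). Then r(T) ≤ radius(T), where radius(T) is the radius of the underlying tree. -/
namespace Readability

/-!
Root the tree at a centre `c`. The word of a vertex `x` lists the `Vs`-vertices on the path from
`x` up to `c`, followed by the `Vp`-vertices on the path from `c` down to `x`; its length is
`dist(c, x) + 1 ≤ radius + 1`. The word of a child extends the word of its parent by one letter,
at the front for a `Vs`-child and at the back for a `Vp`-child, so adjacent vertices overlap.
Conversely, as `Vs`- and `Vp`-letters differ, an overlap splits into an overlap of the `Vs`-parts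
and one of the `Vp`-parts; comparing their first or last letters exhibits one vertex as the parent
of the other, except in one case that is excluded by counting the letters of each side along the
alternating root paths. Padding to length `radius`, with one fresh letter on the left of the
`Vs`-words and another on the right of the `Vp`-words, creates no new overlaps.
-/

section Overlap

variable {α : Type*}

lemma overlapsBy_map_iff_s18 {β : Type*} {f : α → β} (hf : Function.Injective f)
    {w w' : List α} {i : ℕ} : OverlapsBy (w.map f) (w'.map f) i ↔ OverlapsBy w w' i := by
  simp only [OverlapsBy, List.length_map, ← List.map_drop, ← List.map_take,
    (List.map_injective_iff.2 hf).eq_iff]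

lemma overlapsBy_append {w : List α} (hw : w ≠ []) (v : List α) :
    OverlapsBy w (w ++ v) w.length :=
  ⟨List.length_pos_of_ne_nil hw, by simp, by simp⟩

lemma overlapsBy_cons {w : List α} (hw : w ≠ []) (a : α) :
    OverlapsBy (a :: w) w w.length :=
  ⟨List.length_pos_of_ne_nil hw, by simp, by simp⟩

def padLeft (a : α) (r : ℕ) (w : List α) : List α := (List.replicate r a ++ w).drop w.length

def padRight (b : α) (r : ℕ) (w : List α) : List α := (w ++ List.replicate r b).take r

lemma length_padLeft (a : α) (r : ℕ) (w : List α) : (padLeft a r w).length = r := by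
  simp [padLeft]

lemma length_padRight (b : α) (r : ℕ) (w : List α) : (padRight b r w).length = r := by
  simp [padRight]

lemma drop_padLeft (a : α) (w : List α) {r i : ℕ} (hi : i ≤ r) :
    (padLeft a r w).drop (r - i) = List.replicate (i - w.length) a ++ w.drop (w.length - i) := by
  rw [padLeft, List.drop_drop, List.drop_append, List.drop_replicate, List.length_replicate]
  congr 2 <;> omega

lemma take_padRight (b : α) (w : List α) {r i : ℕ} (hi : i ≤ r) :
    (padRight b r w).take i = w.take i ++ List.replicate (i - w.length) b := by
  rw [padRight, List.take_take, min_eq_left hi, List.take_append, List.take_replicate]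
  congr 2
  omega

lemma overlapsBy_padLeft_padRight_iff {a b : α} {w w' : List α} (ha : a ∉ w') (hb : b ∉ w)
    (hab : a ≠ b) {r i : ℕ} :
    OverlapsBy (padLeft a r w) (padRight b r w') i ↔ i ≤ r ∧ OverlapsBy w w' i := by
  simp only [OverlapsBy, length_padLeft, length_padRight, min_self]
  constructor
  · rintro ⟨hi, hir, heq⟩
    rw [drop_padLeft a w hir, take_padRight b w' hir] at heq
    have hiw : i ≤ w.length := by
      by_contra! h
      have : a ∈ w'.take i ++ List.replicate (i - w'.length) b := by
        rw [← heq]; exact List.mem_append_left _ (List.mem_replicate.2 ⟨by omega, rfl⟩)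
      rcases List.mem_append.1 this with h' | h'
      · exact ha (List.mem_of_mem_take h')
      · exact hab (List.eq_of_mem_replicate h')
    have hiw' : i ≤ w'.length := by
      by_contra! h
      have : b ∈ List.replicate (i - w.length) a ++ w.drop (w.length - i) := by
        rw [heq]; exact List.mem_append_right _ (List.mem_replicate.2 ⟨by omega, rfl⟩)
      rcases List.mem_append.1 this with h' | h'
      · exact hab (List.eq_of_mem_replicate h').symm
      · exact hb (List.mem_of_mem_drop h')
    refine ⟨hir, hi, le_min hiw hiw', ?_⟩
    simpa [Nat.sub_eq_zero_of_le hiw, Nat.sub_eq_zero_of_le hiw'] using heq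
  · rintro ⟨hir, hi, hiw, heq⟩
    refine ⟨hi, hir, ?_⟩
    rw [drop_padLeft a w hir, take_padRight b w' hir, heq]
    simp [Nat.sub_eq_zero_of_le (le_min_iff.1 hiw).1, Nat.sub_eq_zero_of_le (le_min_iff.1 hiw).2]

end Overlap

section PathWord

variable {Vs Vp : Type*}

def leftPart (l : List (Vs ⊕ Vp)) : List (Vs ⊕ Vp) := l.filter (·.isLeft)

def rightPart (l : List (Vs ⊕ Vp)) : List (Vs ⊕ Vp) := (l.filter (·.isRight)).reverse

/-- For the ancestor list `x, parent x, …, root` of `x`, this lists the `Vs`-vertices from `x` up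
to the root, followed by the `Vp`-vertices from the root down to `x`. -/
def pathWord (l : List (Vs ⊕ Vp)) : List (Vs ⊕ Vp) := leftPart l ++ rightPart l

@[simp] lemma leftPart_nil : leftPart ([] : List (Vs ⊕ Vp)) = [] := rfl

@[simp] lemma rightPart_nil : rightPart ([] : List (Vs ⊕ Vp)) = [] := rfl

@[simp] lemma leftPart_cons_inl (a : Vs) (l : List (Vs ⊕ Vp)) :
    leftPart (.inl a :: l) = .inl a :: leftPart l := by
  simp [leftPart, List.filter_cons]

@[simp] lemma leftPart_cons_inr (b : Vp) (l : List (Vs ⊕ Vp)) :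
    leftPart (.inr b :: l) = leftPart l := by
  simp [leftPart]

@[simp] lemma rightPart_cons_inl (a : Vs) (l : List (Vs ⊕ Vp)) :
    rightPart (.inl a :: l) = rightPart l := by
  simp [rightPart]

@[simp] lemma rightPart_cons_inr (b : Vp) (l : List (Vs ⊕ Vp)) :
    rightPart (.inr b :: l) = rightPart l ++ [.inr b] := by
  simp [rightPart, List.filter_cons]

lemma isLeft_of_mem_leftPart {l : List (Vs ⊕ Vp)} {z : Vs ⊕ Vp} (hz : z ∈ leftPart l) :
    z.isLeft := (List.mem_filter.1 hz).2

lemma isRight_of_mem_rightPart {l : List (Vs ⊕ Vp)} {z : Vs ⊕ Vp} (hz : z ∈ rightPart l) :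
    z.isRight := (List.mem_filter.1 (List.mem_reverse.1 hz)).2

lemma pathWord_cons_inl (a : Vs) (l : List (Vs ⊕ Vp)) :
    pathWord (.inl a :: l) = .inl a :: pathWord l := by
  simp [pathWord]

lemma pathWord_cons_inr (b : Vp) (l : List (Vs ⊕ Vp)) :
    pathWord (.inr b :: l) = pathWord l ++ [.inr b] := by
  simp [pathWord]

lemma length_pathWord (l : List (Vs ⊕ Vp)) : (pathWord l).length = l.length := by
  induction l with
  | nil => rfl
  | cons z l ih => rcases z with a | b <;> simp [pathWord_cons_inl, pathWord_cons_inr, ih]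

lemma leftPart_rightPart_eq_of_append_eq {A B C D : List (Vs ⊕ Vp)}
    (h : A ++ B = C ++ D) (hA : ∀ z ∈ A, z.isLeft) (hB : ∀ z ∈ B, z.isRight)
    (hC : ∀ z ∈ C, z.isLeft) (hD : ∀ z ∈ D, z.isRight) : A = C ∧ B = D := by
  have key : ∀ {X Y : List (Vs ⊕ Vp)}, (∀ z ∈ X, z.isLeft) → (∀ z ∈ Y, z.isRight) →
      (X ++ Y).filter (·.isLeft) = X ∧ (X ++ Y).filter (·.isRight) = Y := by
    intro X Y hX hY
    rw [List.filter_append, List.filter_append, List.filter_eq_self.2 hX,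
      List.filter_eq_self.2 hY, List.filter_eq_nil_iff.2 fun z hz => Sum.not_isLeft.2 (hY z hz),
      List.filter_eq_nil_iff.2 fun z hz => Sum.not_isRight.2 (hX z hz)]
    simp
  constructor
  · rw [← (key hA hB).1, h, (key hC hD).1]
  · rw [← (key hA hB).2, h, (key hC hD).2]

end PathWord

section AncestorChains

variable {Vs Vp : Type*} {E : Vs → Vp → Prop}

lemma underlyingGraph_adj_inl {a : Vs} {z : Vs ⊕ Vp} :
    (underlyingGraph E).Adj (.inl a) z ↔ ∃ b, z = .inr b ∧ E a b := by
  simp [underlyingGraph]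

lemma underlyingGraph_adj_inr {b : Vp} {z : Vs ⊕ Vp} :
    (underlyingGraph E).Adj (.inr b) z ↔ ∃ a, z = .inl a ∧ E a b := by
  simp [underlyingGraph]

lemma underlyingGraph_adj_inl_inr {a : Vs} {b : Vp} :
    (underlyingGraph E).Adj (.inl a) (.inr b) ↔ E a b := by
  simp [underlyingGraph_adj_inl]

lemma eq_nil_of_rightPart_eq_nil {a : Vs} {l : List (Vs ⊕ Vp)}
    (hl : (.inl a :: l).IsChain (underlyingGraph E).Adj) (h : rightPart (.inl a :: l) = []) :
    l = [] := by
  rcases l with _ | ⟨z, l⟩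
  · rfl
  · obtain ⟨b, rfl, -⟩ := underlyingGraph_adj_inl.1 (List.isChain_cons_cons.1 hl).1
    simp at h

lemma eq_nil_of_leftPart_eq_nil {b : Vp} {m : List (Vs ⊕ Vp)}
    (hm : (.inr b :: m).IsChain (underlyingGraph E).Adj) (h : leftPart (.inr b :: m) = []) :
    m = [] := by
  rcases m with _ | ⟨z, m⟩
  · rfl
  · obtain ⟨a, rfl, -⟩ := underlyingGraph_adj_inr.1 (List.isChain_cons_cons.1 hm).1
    simp at h

lemma adj_of_getLast?_rightPart {a : Vs} {b : Vp} {l : List (Vs ⊕ Vp)}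
    (hl : (.inl a :: l).IsChain (underlyingGraph E).Adj)
    (h : (rightPart (.inl a :: l)).getLast? = some (.inr b)) : E a b := by
  rcases l with _ | ⟨z, l⟩
  · simp at h
  · obtain ⟨b', rfl, hab'⟩ := underlyingGraph_adj_inl.1 (List.isChain_cons_cons.1 hl).1
    simp only [rightPart_cons_inl, rightPart_cons_inr, List.getLast?_concat, Option.some.injEq,
      Sum.inr.injEq] at h
    exact h ▸ hab'

lemma adj_of_head?_leftPart {a : Vs} {b : Vp} {m : List (Vs ⊕ Vp)}
    (hm : (.inr b :: m).IsChain (underlyingGraph E).Adj)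
    (h : (leftPart (.inr b :: m)).head? = some (.inl a)) : E a b := by
  rcases m with _ | ⟨z, m⟩
  · simp at h
  · obtain ⟨a', rfl, ha'b⟩ := underlyingGraph_adj_inr.1 (List.isChain_cons_cons.1 hm).1
    simp only [leftPart_cons_inr, leftPart_cons_inl, List.head?_cons, Option.some.injEq,
      Sum.inl.injEq] at h
    exact h ▸ ha'b

lemma length_leftPart_add_toNat {x c : Vs ⊕ Vp} {l : List (Vs ⊕ Vp)}
    (hl : (x :: l).IsChain (underlyingGraph E).Adj) (hc : (x :: l).getLast? = some c) :
    (leftPart (x :: l)).length + x.isRight.toNat =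
      (rightPart (x :: l)).length + c.isLeft.toNat := by
  induction l generalizing x with
  | nil =>
    obtain rfl : x = c := by simpa using hc
    rcases x with a | b <;> simp
  | cons y l ih =>
    obtain ⟨hxy, hl⟩ := List.isChain_cons_cons.1 hl
    have := ih hl (by rwa [List.getLast?_cons_cons] at hc)
    rcases hxy with ⟨a, b, rfl, rfl, -⟩ | ⟨a, b, rfl, rfl, -⟩ <;>
    · simp only [leftPart_cons_inl, leftPart_cons_inr, rightPart_cons_inl, rightPart_cons_inr,
        Sum.isRight_inl, Sum.isRight_inr, Bool.toNat_false, Bool.toNat_true, List.length_cons,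
        List.length_append, List.length_nil] at this ⊢
      omega

lemma exists_drop_eq_take_of_overlapsBy_pathWord {L M : List (Vs ⊕ Vp)} {i : ℕ}
    (h : OverlapsBy (pathWord L) (pathWord M) i) :
    ∃ j, (leftPart L).drop j = (leftPart M).take i ∧
      (rightPart L).drop (j - (leftPart L).length) =
        (rightPart M).take (i - (leftPart M).length) := by
  obtain ⟨-, -, heq⟩ := h
  rw [pathWord, pathWord, List.drop_append, List.take_append] at heq
  exact ⟨_, leftPart_rightPart_eq_of_append_eq heq
    (fun _ hz => isLeft_of_mem_leftPart (List.mem_of_mem_drop hz))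
    (fun _ hz => isRight_of_mem_rightPart (List.mem_of_mem_drop hz))
    (fun _ hz => isLeft_of_mem_leftPart (List.mem_of_mem_take hz))
    (fun _ hz => isRight_of_mem_rightPart (List.mem_of_mem_take hz))⟩

theorem adj_of_overlapsBy_pathWord {a : Vs} {b : Vp} {l m : List (Vs ⊕ Vp)} {i : ℕ}
    (hl : (.inl a :: l).IsChain (underlyingGraph E).Adj)
    (hm : (.inr b :: m).IsChain (underlyingGraph E).Adj)
    (hroot : (.inl a :: l).getLast? = (.inr b :: m).getLast?)
    (h : OverlapsBy (pathWord (.inl a :: l)) (pathWord (.inr b :: m)) i) : E a b := by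
  have hi := h.1
  obtain ⟨j, hS, hP⟩ := exists_drop_eq_take_of_overlapsBy_pathWord h
  by_cases hjS : (leftPart (.inl a :: l)).length ≤ j
  · -- the overlap lies inside the right part of `inl a`, and `inr b` is the root
    rw [List.drop_eq_nil_of_le hjS, eq_comm, List.take_eq_nil_iff] at hS
    obtain rfl := eq_nil_of_leftPart_eq_nil hm (hS.resolve_left (by omega))
    apply adj_of_getLast?_rightPart hl
    have hlast := congrArg List.getLast? hP
    simp only [leftPart_cons_inr, leftPart_nil, List.length_nil, Nat.sub_zero, rightPart_cons_inr,
      rightPart_nil, List.nil_append, List.take_of_length_le (show [_].length ≤ i from hi),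
      List.getLast?_singleton, List.getLast?_drop] at hlast
    split_ifs at hlast
    exact hlast
  by_cases hiS : i ≤ (leftPart (.inr b :: m)).length
  · -- the overlap lies inside the left part of `inr b`, and `inl a` is the root
    rw [Nat.sub_eq_zero_of_le (by omega), Nat.sub_eq_zero_of_le hiS, List.drop_zero,
      List.take_zero] at hP
    obtain rfl := eq_nil_of_rightPart_eq_nil hl hP
    apply adj_of_head?_leftPart hm
    have hhead := congrArg List.head? hS
    simp only [leftPart_cons_inl, leftPart_nil, List.length_singleton] at hjS hhead
    obtain rfl : j = 0 := by omega
    rw [List.head?_take, if_neg (by omega)] at hhead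
    exact hhead.symm
  rw [List.take_of_length_le (by omega)] at hS
  rw [Nat.sub_eq_zero_of_le (by omega), List.drop_zero] at hP
  by_cases hj : j = 0
  · -- the overlap is the whole word of `inl a`, which is then the parent of `inr b`
    apply adj_of_head?_leftPart hm
    rw [← hS, hj, List.drop_zero, leftPart_cons_inl, List.head?_cons]
  by_cases hk : (rightPart (.inr b :: m)).length ≤ i - (leftPart (.inr b :: m)).length
  · -- the overlap is the whole word of `inr b`, which is then the parent of `inl a`
    apply adj_of_getLast?_rightPart hl
    rw [hP, List.take_of_length_le hk, rightPart_cons_inr, List.getLast?_concat]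
  -- otherwise both parts overlap properly, which the alternation of sides forbids
  exfalso
  obtain ⟨c, hc⟩ : ∃ c, (.inl a :: l).getLast? = some c :=
    ⟨_, List.getLast?_eq_some_getLast (List.cons_ne_nil _ _)⟩
  have hcountL := length_leftPart_add_toNat hl hc
  have hcountM := length_leftPart_add_toNat hm (hroot ▸ hc)
  have hlenS := congrArg List.length hS
  have hlenP := congrArg List.length hP
  simp only [List.length_drop, List.length_take, Sum.isRight_inl, Sum.isRight_inr,
    Bool.toNat_false, Bool.toNat_true] at hcountL hcountM hlenS hlenP
  omega

end AncestorChains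

/-- Ancestor lists `x, parent x, …, c` of a spanning tree of `G` rooted at `c` whose edges are all
the edges of `G`. -/
structure AncestorLists {V : Type*} (G : SimpleGraph V) (c : V) where
  anc : V → List V
  isChain : ∀ x, (anc x).IsChain G.Adj
  head?_eq : ∀ x, (anc x).head? = some x
  getLast?_eq : ∀ x, (anc x).getLast? = some c
  cons_of_adj : ∀ ⦃x y⦄, G.Adj x y → anc y = y :: anc x ∨ anc x = x :: anc y

lemma AncestorLists.anc_ne_nil {V : Type*} {G : SimpleGraph V} {c : V} (A : AncestorLists G c)
    (x : V) : A.anc x ≠ [] := by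
  intro h
  simpa [h] using A.head?_eq x

section Tree

variable {V : Type*} {G : SimpleGraph V}

noncomputable def rootPath (hG : G.IsTree) (c x : V) : G.Walk c x :=
  (hG.connected c x).exists_path_of_dist.choose

lemma isPath_rootPath (hG : G.IsTree) (c x : V) : (rootPath hG c x).IsPath :=
  (hG.connected c x).exists_path_of_dist.choose_spec.1

lemma length_rootPath (hG : G.IsTree) (c x : V) : (rootPath hG c x).length = G.dist c x :=
  (hG.connected c x).exists_path_of_dist.choose_spec.2

lemma rootPath_of_adj (hG : G.IsTree) (c : V) {x y : V} (hxy : G.Adj x y) :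
    rootPath hG c y = (rootPath hG c x).concat hxy ∨
      rootPath hG c x = (rootPath hG c y).concat hxy.symm := by
  by_cases hy : y ∈ (rootPath hG c x).support
  · exact .inr <| hG.isAcyclic.path_concat (isPath_rootPath hG c y) (isPath_rootPath hG c x)
      hxy.symm hy
  · have hx := hG.isAcyclic.mem_support_of_ne_mem_support_of_adj_of_isPath
      (isPath_rootPath hG c y) (isPath_rootPath hG c x) hxy.symm hy
    exact .inl <| hG.isAcyclic.path_concat (isPath_rootPath hG c x) (isPath_rootPath hG c y)
      hxy hx

noncomputable def treeAncestorLists (hG : G.IsTree) (c : V) : AncestorLists G c where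
  anc x := (rootPath hG c x).reverse.support
  isChain x := SimpleGraph.Walk.isChain_adj_support _
  head?_eq x := by rw [← SimpleGraph.Walk.cons_tail_support]; rfl
  getLast?_eq x := by
    rw [List.getLast?_eq_some_getLast (by simp), SimpleGraph.Walk.getLast_support]
  cons_of_adj x y hxy := by
    rcases rootPath_of_adj hG c hxy with h | h
    · exact .inl (by rw [h, SimpleGraph.Walk.reverse_concat, SimpleGraph.Walk.support_cons])
    · exact .inr (by rw [h, SimpleGraph.Walk.reverse_concat, SimpleGraph.Walk.support_cons])

lemma length_anc_treeAncestorLists (hG : G.IsTree) (c x : V) :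
    ((treeAncestorLists hG c).anc x).length = G.dist c x + 1 := by
  simp [treeAncestorLists, length_rootPath]

lemma exists_forall_dist_le_graphRadius [Finite V] [Nonempty V] (G : SimpleGraph V) :
    ∃ c, ∀ v, G.dist c v ≤ graphRadius G := by
  obtain ⟨c⟩ := ‹Nonempty V›
  obtain ⟨B, hB⟩ := (Set.finite_range (G.dist c)).bddAbove
  exact Nat.sInf_mem (s := {r | ∃ u, ∀ v, G.dist u v ≤ r}) ⟨B, c, fun v => hB ⟨v, rfl⟩⟩

end Tree

section Labeling

variable {Vs Vp : Type*} {E : Vs → Vp → Prop} {c : Vs ⊕ Vp}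

theorem adj_iff_exists_overlapsBy_pathWord (A : AncestorLists (underlyingGraph E) c) {r : ℕ}
    (hr : ∀ x, (A.anc x).length ≤ r + 1) (u : Vs) (v : Vp) :
    E u v ↔ ∃ i, i ≤ r ∧ OverlapsBy (pathWord (A.anc (.inl u))) (pathWord (A.anc (.inr v))) i := by
  have hne : ∀ x, pathWord (A.anc x) ≠ [] := fun x => by
    rw [← List.length_pos_iff, length_pathWord, List.length_pos_iff]
    exact A.anc_ne_nil x
  constructor
  · intro huv
    rcases A.cons_of_adj (underlyingGraph_adj_inl_inr.2 huv) with h | h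
    · have := hr (.inr v)
      rw [h, List.length_cons] at this
      refine ⟨(pathWord (A.anc (.inl u))).length, by rw [length_pathWord]; omega, ?_⟩
      rw [h, pathWord_cons_inr]
      exact overlapsBy_append (hne _) _
    · have := hr (.inl u)
      rw [h, List.length_cons] at this
      refine ⟨(pathWord (A.anc (.inr v))).length, by rw [length_pathWord]; omega, ?_⟩
      rw [h, pathWord_cons_inl]
      exact overlapsBy_cons (hne _) _
  · rintro ⟨i, -, h⟩
    obtain ⟨l, hl⟩ := List.head?_eq_some_iff.1 (A.head?_eq (.inl u))
    obtain ⟨m, hm⟩ := List.head?_eq_some_iff.1 (A.head?_eq (.inr v))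
    rw [hl, hm] at h
    refine adj_of_overlapsBy_pathWord (hl ▸ A.isChain _) (hm ▸ A.isChain _) ?_ h
    rw [← hl, ← hm, A.getLast?_eq, A.getLast?_eq]

theorem bReadability_le_of_ancestorLists [Countable Vs] [Countable Vp]
    (A : AncestorLists (underlyingGraph E) c) {r : ℕ} (hr : ∀ x, (A.anc x).length ≤ r + 1) :
    bReadability E ≤ r := by
  obtain ⟨e, he⟩ := exists_injective_nat (Vs ⊕ Vp)
  -- vertex letters are `e x + 2`, leaving `0` and `1` as padding letters
  have hf : Function.Injective (e · + 2) := fun x y h => he (Nat.add_right_cancel h)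
  let word (x : Vs ⊕ Vp) : List ℕ := (pathWord (A.anc x)).map (e · + 2)
  have h0 : ∀ x, 0 ∉ word x := by simp [word]
  have h1 : ∀ x, 1 ∉ word x := by simp [word]
  refine Nat.sInf_le ⟨fun u => padLeft 0 r (word (.inl u)), fun v => padRight 1 r (word (.inr v)),
    fun _ => length_padLeft .., fun _ => length_padRight .., fun u v => ?_⟩
  simp only [overlapsBy_padLeft_padRight_iff (h0 _) (h1 _) zero_ne_one, word,
    overlapsBy_map_iff_s18 hf]
  exact adj_iff_exists_overlapsBy_pathWord A hr u v

end Labeling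

/-- If the underlying undirected graph of the bipartite graph `T` is a tree,
then `r(T) ≤ radius(T)`. -/
theorem statement18 {Vs Vp : Type*} [Fintype Vs] [Fintype Vp] (E : Vs → Vp → Prop)
    (hT : (underlyingGraph E).IsTree) :
    bReadability E ≤ graphRadius (underlyingGraph E) := by
  have : Nonempty (Vs ⊕ Vp) := hT.connected.nonempty
  obtain ⟨c, hc⟩ := exists_forall_dist_le_graphRadius (underlyingGraph E)
  refine bReadability_le_of_ancestorLists (treeAncestorLists hT c) fun x => ?_
  rw [length_anc_treeAncestorLists]
  exact Nat.succ_le_succ (hc x)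

end Readability
end
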